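/- In the symmetric group $S_n$, every Kazhdan–Lusztig two-sided cell contains an element of the form $w_0^S$, the longest element of some standard parabolic (Young) subgroup $W_S$. -/

import Mathlib

/-! Row insertion for the Robinson–Schensted correspondence. -/

/-- Insert `x` into a row `r`: returns the new row and the bumped entry, if any. -/
def rsInsertRow (r : List ℕ) (x : ℕ) : List ℕ × Option ℕ :=
  match r.findIdx? (fun y => x < y) with
  | none => (r ++ [x], none)
  | some i => (r.set i x, some (r.getD i 0))

/-- Insert `x` into a tableau (list of rows); returns the new tableau together with the
index of the row in which a new box was created. -/
def rsInsertTab : List (List ℕ) → ℕ → List (List ℕ) × ℕ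
  | [], x => ([[x]], 0)
  | r :: rs, x =>
    match rsInsertRow r x with
    | (r', none) => (r' :: rs, 0)
    | (r', some y) =>
      let (t, k) := rsInsertTab rs y
      (r' :: t, k + 1)

/-- Auxiliary function building the insertion tableau `P` and the recording tableau `Q`. -/
def rsAux : List (List ℕ) → List (List ℕ) → ℕ → List ℕ → List (List ℕ) × List (List ℕ)
  | P, Q, _, [] => (P, Q)
  | P, Q, k, x :: xs =>
    let (P', r) := rsInsertTab P x
    let Q' := if r < Q.length then Q.set r (Q.getD r [] ++ [k]) else Q ++ [[k]]
    rsAux P' Q' (k + 1) xs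

/-- The pair `(P, Q)` of tableaux associated to a word by the Robinson–Schensted
correspondence. -/
def rsPair (w : List ℕ) : List (List ℕ) × List (List ℕ) := rsAux [] [] 1 w

/-- The shape of a tableau, as the list of its row lengths. -/
def tabShape (t : List (List ℕ)) : List ℕ := t.map List.length

/-- The word (one-line notation) of the longest element of the Young subgroup of type `lam`:
each consecutive block of sizes `lam₁, lam₂, …` is reversed. -/
def youngLongestWord : ℕ → List ℕ → List ℕ
  | _, [] => []
  | off, p :: rest =>
      ((List.range p).reverse.map (fun j => off + j + 1)) ++ youngLongestWord (off + p) rest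

/-- The conjugate partition of a composition `lam`: its `i`-th part is the number of parts of
`lam` that are greater than `i`. -/
def conjPartition (lam : List ℕ) : List ℕ :=
  (List.range (lam.foldr max 0)).map (fun i => lam.countP (fun p => i < p))

/-- The one-line word of a permutation of `Fin n`, with values in `{1, …, n}`. -/
def permWord {n : ℕ} (w : Equiv.Perm (Fin n)) : List ℕ :=
  List.ofFn (fun i => (w i).val + 1)

/-!
Row insertion keeps a tableau column-strict (the bumping route never moves right), so the shape
`s` of `P(w)` is a partition of `n`. In the word of the longest element of the Young subgroup of
type `λ`, each block is a decreasing run of letters larger than all earlier ones, and inserting a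
block of length `p` adds one box at the end of each of the first `p` rows. Hence row `i` of `P`
has as many boxes as `λ` has parts exceeding `i`, i.e. the shape is the conjugate of `λ`; taking
`λ` to be the conjugate of `s` gives back `s`.
-/

theorem List.ext_getD_of_not_mem {α : Type*} {l₁ l₂ : List α} {d : α} (h₁ : d ∉ l₁)
    (h₂ : d ∉ l₂) (h : ∀ i, l₁.getD i d = l₂.getD i d) : l₁ = l₂ := by
  induction l₁ generalizing l₂ with
  | nil => cases l₂ with
    | nil => rfl
    | cons b l₂ => exact absurd (List.mem_cons.mpr (Or.inl (h 0))) h₂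
  | cons a l₁ ih => cases l₂ with
    | nil => exact absurd (List.mem_cons.mpr (Or.inl (h 0).symm)) h₁
    | cons b l₂ =>
      rw [List.mem_cons, not_or] at h₁ h₂
      exact List.cons_eq_cons.mpr ⟨h 0, ih h₁.2 h₂.2 fun i => h (i + 1)⟩

theorem List.getD_le_of_forall_le {s : List ℕ} {B : ℕ} (h : ∀ p ∈ s, p ≤ B) (j : ℕ) :
    s.getD j 0 ≤ B := by
  rcases lt_or_ge j s.length with hj | hj
  · rw [List.getD_eq_getElem _ _ hj]; exact h _ (List.getElem_mem hj)
  · rw [List.getD_eq_default _ _ hj]; exact Nat.zero_le B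

theorem List.countP_range_lt (M v : ℕ) : (List.range M).countP (· < v) = min v M := by
  induction M with
  | zero => simp
  | succ M ih =>
    rw [List.range_succ, List.countP_append, ih]
    by_cases h : M < v <;> simp [h] <;> omega

def setOrAppend (r : List ℕ) (e x : ℕ) : List ℕ :=
  if e < r.length then r.set e x else r ++ [x]

theorem length_setOrAppend (r : List ℕ) (e x : ℕ) :
    (setOrAppend r e x).length = if e < r.length then r.length else r.length + 1 := by
  unfold setOrAppend; split <;> simp

theorem getD_setOrAppend {r : List ℕ} {e : ℕ} (x : ℕ) (he : e ≤ r.length) (j : ℕ) :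
    (setOrAppend r e x).getD j 0 = if j = e then x else r.getD j 0 := by
  unfold setOrAppend
  split
  · simp only [List.getD_eq_getElem?_getD, List.getElem?_set]
    by_cases hj : j = e
    · subst hj; simp [*]
    · simp [hj, Ne.symm hj]
  · obtain rfl : e = r.length := by omega
    simp only [List.getD_eq_getElem?_getD, List.getElem?_append, List.getElem?_singleton]
    split_ifs <;> simp_all
    omega

theorem rsInsertRow_eq (r : List ℕ) (x : ℕ) :
    rsInsertRow r x = (setOrAppend r (r.findIdx (x < ·)) x, r[r.findIdx (x < ·)]?) := by
  unfold rsInsertRow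
  rw [List.findIdx?_eq_guard_findIdx_lt]
  by_cases h : r.findIdx (x < ·) < r.length
  · simp [Option.guard, h, setOrAppend, List.getD_eq_getElem?_getD]
  · simp [Option.guard, h, setOrAppend]

theorem getD_le_of_lt_findIdx {r : List ℕ} {x j : ℕ} (hj : j < r.findIdx (x < ·)) :
    r.getD j 0 ≤ x := by
  have := List.not_of_lt_findIdx hj
  rw [List.getD_eq_getElem _ _ (hj.trans_le List.findIdx_le_length)]
  simpa using this

/-- Row `s` can stand directly below row `r` in a column-strict tableau. -/
def ColStrict (r s : List ℕ) : Prop :=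
  s.length ≤ r.length ∧ ∀ j < s.length, r.getD j 0 < s.getD j 0

theorem colStrict_nil (r : List ℕ) : ColStrict r [] := ⟨by simp, by simp⟩

theorem ColStrict.append_singleton {r s : List ℕ} (h : ColStrict r s) (x : ℕ) :
    ColStrict (r ++ [x]) s :=
  ⟨h.1.trans (by simp), fun j hj => by
    rw [List.getD_append _ _ _ _ (hj.trans_le h.1)]; exact h.2 j hj⟩

theorem rsInsertRow_fst_of_snd_eq_none {r : List ℕ} {x : ℕ} (h : (rsInsertRow r x).2 = none) :
    (rsInsertRow r x).1 = r ++ [x] := by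
  rw [rsInsertRow_eq] at h ⊢
  have : r.findIdx (x < ·) = r.length :=
    le_antisymm List.findIdx_le_length (List.getElem?_eq_none_iff.mp h)
  simp [setOrAppend, this]

theorem lt_of_rsInsertRow_snd_eq_some {r : List ℕ} {x y : ℕ} (h : (rsInsertRow r x).2 = some y) :
    r.findIdx (x < ·) < r.length ∧ r.getD (r.findIdx (x < ·)) 0 = y ∧ x < y := by
  rw [rsInsertRow_eq, List.getElem?_eq_some_iff] at h
  obtain ⟨hlt, rfl⟩ := h
  exact ⟨hlt, List.getD_eq_getElem _ _ hlt, by simpa using List.findIdx_getElem (w := hlt)⟩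

/-- The bumping route never moves right: the entry bumped from `r` lands in `s` at a column
no larger than the one it left. -/
theorem ColStrict.rsInsertRow {r s : List ℕ} {x y : ℕ} (h : ColStrict r s)
    (hy : (rsInsertRow r x).2 = some y) :
    ColStrict (rsInsertRow r x).1 (rsInsertRow s y).1 := by
  obtain ⟨he, hry, hxy⟩ := lt_of_rsInsertRow_snd_eq_some hy
  simp only [rsInsertRow_eq]
  set e := r.findIdx (x < ·)
  set f := s.findIdx (y < ·)
  have hf : f ≤ s.length := List.findIdx_le_length
  have hfe : f ≤ e := by
    by_contra! hef
    have := h.2 e (hef.trans_le hf)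
    have := getD_le_of_lt_findIdx hef
    omega
  refine ⟨?_, fun j hj => ?_⟩
  · rw [length_setOrAppend, length_setOrAppend]
    have := h.1
    split_ifs <;> omega
  · rw [length_setOrAppend] at hj
    rw [getD_setOrAppend _ he.le, getD_setOrAppend _ hf]
    by_cases hjf : j = f
    · by_cases hje : j = e
      · simp [hje, ← hjf, hxy]
      · have hfe : f < e := by omega
        have : r.getD f 0 ≤ x := getD_le_of_lt_findIdx hfe
        rw [if_neg hje, if_pos hjf, hjf]
        omega
    · have hjs : j < s.length := by split_ifs at hj <;> omega
      have := h.2 j hjs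
      by_cases hje : j = e
      · subst hje; simp only [if_true, if_neg hjf]; omega
      · simp only [if_neg hje, if_neg hjf]; exact this

theorem isChain_colStrict_cons {r : List ℕ} {t : List (List ℕ)} :
    (r :: t).IsChain ColStrict ↔ ColStrict r (t.headD []) ∧ t.IsChain ColStrict := by
  cases t <;> simp [colStrict_nil]

theorem length_rsInsertRow_fst_of_snd_eq_some {r : List ℕ} {x y : ℕ}
    (h : (rsInsertRow r x).2 = some y) : (rsInsertRow r x).1.length = r.length := by
  rw [rsInsertRow_eq, length_setOrAppend, if_pos (lt_of_rsInsertRow_snd_eq_some h).1]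

theorem headD_rsInsertTab (t : List (List ℕ)) (x : ℕ) :
    (rsInsertTab t x).1.headD [] = (rsInsertRow (t.headD []) x).1 := by
  cases t with
  | nil => simp [rsInsertTab, rsInsertRow_eq, setOrAppend]
  | cons r rs => rcases h : rsInsertRow r x with ⟨r', _ | y⟩ <;> simp [rsInsertTab, h]

theorem length_flatten_rsInsertTab (t : List (List ℕ)) (x : ℕ) :
    (rsInsertTab t x).1.flatten.length = t.flatten.length + 1 := by
  induction t generalizing x with
  | nil => simp [rsInsertTab]
  | cons r rs ih =>
    rcases h : rsInsertRow r x with ⟨r', _ | y⟩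
    · have := rsInsertRow_fst_of_snd_eq_none (r := r) (x := x) (by simp [h])
      simp_all [rsInsertTab]
      omega
    · have hlen := length_rsInsertRow_fst_of_snd_eq_some (r := r) (x := x) (y := y) (by simp [h])
      simp only [h] at hlen
      simp only [rsInsertTab, h, List.flatten_cons, List.length_append, ih, hlen]
      omega

theorem isChain_rsInsertTab {t : List (List ℕ)} (ht : t.IsChain ColStrict) (x : ℕ) :
    (rsInsertTab t x).1.IsChain ColStrict := by
  induction t generalizing x with
  | nil => simp [rsInsertTab]
  | cons r rs ih =>
    rw [isChain_colStrict_cons] at ht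
    rcases h : rsInsertRow r x with ⟨r', _ | y⟩
    · have hr' : r' = r ++ [x] := by
        simpa [h] using rsInsertRow_fst_of_snd_eq_none (r := r) (x := x) (by simp [h])
      simp only [rsInsertTab, h, hr']
      exact isChain_colStrict_cons.mpr ⟨ht.1.append_singleton x, ht.2⟩
    · have hcol := ht.1.rsInsertRow (x := x) (y := y) (by simp [h])
      simp only [rsInsertTab, h]
      rw [isChain_colStrict_cons, headD_rsInsertTab]
      exact ⟨by rwa [h] at hcol, ih ht.2 y⟩

theorem nil_not_mem_rsInsertTab {t : List (List ℕ)} (ht : [] ∉ t) (x : ℕ) :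
    [] ∉ (rsInsertTab t x).1 := by
  induction t generalizing x with
  | nil => simp [rsInsertTab]
  | cons r rs ih =>
    rw [List.mem_cons, not_or] at ht
    rcases h : rsInsertRow r x with ⟨r', _ | y⟩
    · have := rsInsertRow_fst_of_snd_eq_none (r := r) (x := x) (by simp [h])
      simp_all [rsInsertTab]
    · have hlen := length_rsInsertRow_fst_of_snd_eq_some (r := r) (x := x) (y := y) (by simp [h])
      simp only [h] at hlen
      simp only [rsInsertTab, h, List.mem_cons, not_or]
      refine ⟨fun h' => ht.1 ?_, ih ht.2 y⟩
      subst h'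
      exact (List.length_eq_zero_iff.mp hlen.symm).symm

def rsInsertWord (t : List (List ℕ)) (w : List ℕ) : List (List ℕ) :=
  w.foldl (fun t x => (rsInsertTab t x).1) t

theorem rsInsertWord_cons (t : List (List ℕ)) (x : ℕ) (w : List ℕ) :
    rsInsertWord t (x :: w) = rsInsertWord (rsInsertTab t x).1 w :=
  rfl

theorem rsInsertWord_append (t : List (List ℕ)) (v w : List ℕ) :
    rsInsertWord t (v ++ w) = rsInsertWord (rsInsertWord t v) w :=
  List.foldl_append

theorem rsAux_fst (P Q : List (List ℕ)) (k : ℕ) (w : List ℕ) :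
    (rsAux P Q k w).1 = rsInsertWord P w := by
  induction w generalizing P Q k with
  | nil => rfl
  | cons x w ih => rw [rsAux, ih]; rfl

theorem rsPair_fst (w : List ℕ) : (rsPair w).1 = rsInsertWord [] w :=
  rsAux_fst [] [] 1 w

theorem pairwise_tabShape_rsPair (w : List ℕ) :
    (tabShape (rsPair w).1).Pairwise (· ≥ ·) := by
  have hchain : (rsPair w).1.IsChain ColStrict := by
    rw [rsPair_fst]
    exact List.foldlRecOn w _ List.isChain_nil fun t ht x _ => isChain_rsInsertTab ht x
  rw [tabShape, List.pairwise_map, ← List.isChain_iff_pairwise]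
  exact hchain.imp fun r s h => h.1

theorem zero_not_mem_tabShape_rsPair (w : List ℕ) : 0 ∉ tabShape (rsPair w).1 := by
  have hne : [] ∉ (rsPair w).1 := by
    rw [rsPair_fst]
    exact List.foldlRecOn (motive := fun t => [] ∉ t) w _ List.not_mem_nil
      fun t ht x _ => nil_not_mem_rsInsertTab ht x
  simpa [tabShape, List.length_eq_zero_iff] using hne

theorem sum_tabShape_rsPair (w : List ℕ) : (tabShape (rsPair w).1).sum = w.length := by
  suffices ∀ t, (rsInsertWord t w).flatten.length = t.flatten.length + w.length by
    simpa [tabShape, rsPair_fst] using this []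
  induction w with
  | nil => simp [rsInsertWord]
  | cons x w ih =>
    intro t
    rw [rsInsertWord_cons, ih, length_flatten_rsInsertTab, List.length_cons]
    omega

def appendColumn : List (List ℕ) → List ℕ → List (List ℕ)
  | t, [] => t
  | [], v :: vs => [v] :: appendColumn [] vs
  | r :: t, v :: vs => (r ++ [v]) :: appendColumn t vs

theorem appendColumn_cons (t : List (List ℕ)) (v : ℕ) (vs : List ℕ) :
    appendColumn t (v :: vs) = (t.headD [] ++ [v]) :: appendColumn t.tail vs := by
  cases t <;> rfl

theorem getD_tabShape_appendColumn (t : List (List ℕ)) (vs : List ℕ) (i : ℕ) :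
    (tabShape (appendColumn t vs)).getD i 0
      = (tabShape t).getD i 0 + if i < vs.length then 1 else 0 := by
  induction vs generalizing t i with
  | nil => simp [appendColumn]
  | cons v vs ih =>
    rw [appendColumn_cons]
    cases i with
    | zero => cases t <;> simp [tabShape]
    | succ i =>
      cases t with
      | nil => simpa [tabShape] using ih [] i
      | cons r t => simpa [tabShape] using ih t i

theorem le_of_mem_appendColumn {t : List (List ℕ)} {vs : List ℕ} {B : ℕ}
    (ht : ∀ r ∈ t, ∀ v ∈ r, v ≤ B) (hvs : ∀ v ∈ vs, v ≤ B) :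
    ∀ r ∈ appendColumn t vs, ∀ v ∈ r, v ≤ B := by
  induction vs generalizing t with
  | nil => exact ht
  | cons v vs ih =>
    rw [appendColumn_cons]
    simp only [List.mem_cons, forall_eq_or_imp] at hvs ⊢
    refine ⟨?_, ih (fun r hr => ht r (List.mem_of_mem_tail hr)) hvs.2⟩
    cases t <;> simp_all [or_imp, forall_and]

theorem rsInsertRow_append_singleton {r : List ℕ} {x d : ℕ} (hr : ∀ v ∈ r, v ≤ x) (hd : x < d) :
    rsInsertRow (r ++ [d]) x = (r ++ [x], some d) := by
  have : (r ++ [d]).findIdx (x < ·) = r.length := by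
    rw [List.findIdx_append, List.findIdx_eq_length_of_false (by simpa using hr)]
    simp [hd]
  simp [rsInsertRow_eq, this, setOrAppend]

theorem rsInsertTab_of_forall_le {t : List (List ℕ)} {x : ℕ} (h : ∀ r ∈ t, ∀ v ∈ r, v ≤ x) :
    rsInsertTab t x = (appendColumn t [x], 0) := by
  cases t with
  | nil => rfl
  | cons r t =>
    have : rsInsertRow r x = (r ++ [x], none) := by
      have : r.findIdx (x < ·) = r.length :=
        List.findIdx_eq_length_of_false (by simpa using h r (by simp))
      simp [rsInsertRow_eq, this, setOrAppend]
    simp [rsInsertTab, this, appendColumn]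

theorem rsInsertTab_appendColumn_range' (j : ℕ) {t : List (List ℕ)} {c : ℕ}
    (ht : ∀ r ∈ t, ∀ v ∈ r, v ≤ c) :
    rsInsertTab (appendColumn t (List.range' (c + 1) j)) c
      = (appendColumn t (List.range' c (j + 1)), j) := by
  induction j generalizing t c with
  | zero => exact rsInsertTab_of_forall_le ht
  | succ j ih =>
    have hrow : rsInsertRow (t.headD [] ++ [c + 1]) c = (t.headD [] ++ [c], some (c + 1)) :=
      rsInsertRow_append_singleton (fun v hv => by cases t <;> simp_all) (Nat.lt_succ_self c)
    have htail : ∀ r ∈ t.tail, ∀ v ∈ r, v ≤ c + 1 :=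
      fun r hr v hv => (ht r (List.mem_of_mem_tail hr) v hv).trans c.le_succ
    rw [List.range'_succ, appendColumn_cons, rsInsertTab, hrow]
    simp only [ih htail, List.range'_succ (n := j + 1), appendColumn_cons]

theorem rsInsertWord_reverse_range' (m : ℕ) {t : List (List ℕ)} {c : ℕ}
    (ht : ∀ r ∈ t, ∀ v ∈ r, v ≤ c) (j : ℕ) :
    rsInsertWord (appendColumn t (List.range' (c + m) j)) (List.range' c m).reverse
      = appendColumn t (List.range' c (m + j)) := by
  induction m generalizing j with
  | zero => simp [rsInsertWord]
  | succ m ih =>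
    rw [List.range'_concat, List.reverse_append, List.reverse_singleton, List.singleton_append,
      one_mul, rsInsertWord_cons, ← add_assoc,
      rsInsertTab_appendColumn_range' j fun r hr v hv => (ht r hr v hv).trans (c.le_add_right m),
      ih, add_right_comm, add_assoc]

theorem youngLongestWord_cons (off p : ℕ) (lam : List ℕ) :
    youngLongestWord off (p :: lam)
      = (List.range' (off + 1) p).reverse ++ youngLongestWord (off + p) lam := by
  have : (fun j => off + j + 1) = (off + 1 + ·) := by funext j; omega
  rw [youngLongestWord, List.map_reverse, List.range_eq_range', this, List.map_add_range',
    add_zero]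

theorem youngLongestWord_perm (lam : List ℕ) (off : ℕ) :
    (youngLongestWord off lam).Perm (List.range' (off + 1) lam.sum) := by
  induction lam generalizing off with
  | nil => simp [youngLongestWord]
  | cons p lam ih =>
    rw [youngLongestWord_cons, List.sum_cons, ← List.range'_append_1]
    exact (List.reverse_perm _).append (by simpa [add_right_comm] using ih (off + p))

theorem getD_tabShape_rsInsertWord_youngLongestWord (lam : List ℕ) {t : List (List ℕ)}
    {off : ℕ} (ht : ∀ r ∈ t, ∀ v ∈ r, v ≤ off) (i : ℕ) :
    (tabShape (rsInsertWord t (youngLongestWord off lam))).getD i 0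
      = (tabShape t).getD i 0 + lam.countP (i < ·) := by
  induction lam generalizing t off with
  | nil => simp [youngLongestWord, rsInsertWord]
  | cons p lam ih =>
    have hblock := rsInsertWord_reverse_range' p (c := off + 1)
      (fun r hr v hv => (ht r hr v hv).trans off.le_succ) 0
    have hbound : ∀ r ∈ appendColumn t (List.range' (off + 1) p), ∀ v ∈ r, v ≤ off + p :=
      le_of_mem_appendColumn (fun r hr v hv => (ht r hr v hv).trans (off.le_add_right p))
        (fun v hv => by rw [List.mem_range'_1] at hv; omega)
    simp only [List.range'_zero, appendColumn, add_zero] at hblock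
    rw [youngLongestWord_cons, rsInsertWord_append, hblock, ih hbound,
      getD_tabShape_appendColumn, List.countP_cons, List.length_range']
    simp only [decide_eq_true_eq]
    omega

theorem exists_permWord_eq {n : ℕ} {L : List ℕ} (hL : L.Perm (List.range' 1 n)) :
    ∃ u : Equiv.Perm (Fin n), permWord u = L := by
  obtain rfl : L.length = n := by simpa using hL.length_eq
  have hbound (i : Fin L.length) : 1 ≤ L[(i : ℕ)] ∧ L[(i : ℕ)] < 1 + L.length :=
    List.mem_range'_1.mp (hL.subset (List.getElem_mem _))
  let f (i : Fin L.length) : Fin L.length := ⟨L[(i : ℕ)] - 1, by have := hbound i; omega⟩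
  have hf : Function.Injective f := fun i j hij => by
    have := hbound i; have := hbound j
    simp only [f, Fin.ext_iff] at hij
    exact Fin.ext ((hL.nodup_iff.mpr List.nodup_range').getElem_inj_iff.mp (by omega))
  refine ⟨Equiv.ofBijective f hf.bijective_of_finite, List.ext_getElem (by simp [permWord]) ?_⟩
  intro i _ hi
  have : 1 ≤ L[i] := (hbound ⟨i, hi⟩).1
  simp only [permWord, List.getElem_ofFn, Equiv.ofBijective_apply, f]
  omega

theorem pos_of_mem_conjPartition (lam : List ℕ) : ∀ q ∈ conjPartition lam, 0 < q := by
  simp only [conjPartition, List.mem_map, List.mem_range]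
  rintro _ ⟨i, hi, rfl⟩
  obtain ⟨p, hp, hip⟩ : ∃ p ∈ lam, i < p := by
    by_contra! h
    exact hi.not_ge (List.max_le_of_forall_le lam i h)
  exact List.countP_pos_iff.mpr ⟨p, hp, by simpa using hip⟩

theorem lt_countP_iff_lt_getD {s : List ℕ} (hs : s.Pairwise (· ≥ ·)) (i j : ℕ) :
    j < s.countP (i < ·) ↔ i < s.getD j 0 := by
  induction s generalizing j with
  | nil => simp
  | cons a s ih =>
    rw [List.pairwise_cons] at hs
    rw [List.countP_cons]
    by_cases hia : i < a
    · cases j with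
      | zero => simp [hia]
      | succ j =>
        simp only [hia, decide_true, if_true, add_lt_add_iff_right, List.getD_cons_succ]
        exact ih hs.2 j
    · have hzero : s.countP (i < ·) = 0 :=
        List.countP_eq_zero.mpr fun p hp => by simpa using (hs.1 p hp).trans (not_lt.mp hia)
      have : (a :: s).getD j 0 ≤ a :=
        List.getD_le_of_forall_le (fun p hp => by
          rcases List.mem_cons.mp hp with rfl | hp
          exacts [le_rfl, hs.1 p hp]) j
      simp only [hzero, hia, decide_false, Bool.false_eq_true, if_false]
      omega

/-- Entrywise, this says that conjugation is an involution on partitions. -/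
theorem countP_conjPartition {s : List ℕ} (hs : s.Pairwise (· ≥ ·)) (i : ℕ) :
    (conjPartition s).countP (i < ·) = s.getD i 0 := by
  rw [conjPartition, List.countP_map]
  have : (List.range (s.foldr max 0)).countP ((i < ·) ∘ fun j => s.countP (j < ·))
      = (List.range (s.foldr max 0)).countP (· < s.getD i 0) :=
    List.countP_congr fun j _ => by simpa using lt_countP_iff_lt_getD hs j i
  rw [this, List.countP_range_lt, min_eq_left]
  exact List.getD_le_of_forall_le (fun p hp => List.le_max_of_le' 0 hp le_rfl) i

/-- Here two-sided cells are described via the Robinson–Schensted correspondence: two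
permutations lie in the same two-sided cell iff their RS tableaux have the same shape. -/
theorem two_sided_cell_contains_parabolic_longest_element (n : ℕ)
    (w : Equiv.Perm (Fin n)) :
    ∃ lam : List ℕ, (∀ p ∈ lam, 0 < p) ∧ lam.sum = n ∧
      ∃ u : Equiv.Perm (Fin n), permWord u = youngLongestWord 0 lam ∧
        tabShape (rsPair (permWord u)).1 = tabShape (rsPair (permWord w)).1 := by
  have hs_pos := zero_not_mem_tabShape_rsPair (permWord w)
  have hs_anti := pairwise_tabShape_rsPair (permWord w)
  have hs_sum := sum_tabShape_rsPair (permWord w)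
  generalize tabShape (rsPair (permWord w)).1 = s at hs_pos hs_anti hs_sum ⊢
  have hshape : tabShape (rsPair (youngLongestWord 0 (conjPartition s))).1 = s := by
    refine List.ext_getD_of_not_mem (zero_not_mem_tabShape_rsPair _) hs_pos fun i => ?_
    rw [rsPair_fst, getD_tabShape_rsInsertWord_youngLongestWord _ (by simp),
      countP_conjPartition hs_anti]
    simp [tabShape]
  have hsum : (conjPartition s).sum = n := by
    have := sum_tabShape_rsPair (youngLongestWord 0 (conjPartition s))
    rwa [hshape, hs_sum, (youngLongestWord_perm _ 0).length_eq, List.length_range', permWord,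
      List.length_ofFn, eq_comm] at this
  obtain ⟨u, hu⟩ := exists_permWord_eq (hsum ▸ youngLongestWord_perm (conjPartition s) 0)
  exact ⟨conjPartition s, pos_of_mem_conjPartition s, hsum, u, hu, by rw [hu, hshape]⟩
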